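/- arXiv:2604.01656 — 2 statements merged into one kernel-verified Lean document; each statement's English description precedes it below -/
import Mathlib

section
/- (Corollary 1, matrix representation) Under the hypotheses of Theorem 2 (spectra of A and S disjoint, S = T^{−1}ΣT with Σ = blkdiag(J(s_1,ν_1),…,J(s_d,ν_d)), E_i the block selectors), define 𝐇 := Σ_{i=1}^{d} Σ_{k=0}^{ν_i−1} (E_i (s_i I_ν − Σ^⊤)^k E_i) ⊗ η_k(s_i) ∈ ℂ^{pν×mν} and 𝐓_S := (T ⊗ I_p)^⊤ · 𝐇 · ((T ⊗ I_m)^⊤)^{−1} ∈ ℂ^{pν×mν}. Then for every M ∈ ℝ^{m×ν}, vec(T_S(M)) = 𝐓_S · vec(M), where vec stacks the columns of a matrix into a single vector. -/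
open Matrix Kronecker

/-- The `r × r` Jordan block with eigenvalue `s`. -/
def jordanBlock (s : ℂ) (r : ℕ) : Matrix (Fin r) (Fin r) ℂ :=
  Matrix.of fun i j => if (i : ℕ) = (j : ℕ) then s
    else if (i : ℕ) + 1 = (j : ℕ) then 1 else 0

/-- The `k`-moment of `(A,B,C,D)` at `s`. -/
noncomputable def kMoment {n m p : ℕ}
    (A : Matrix (Fin n) (Fin n) ℝ) (B : Matrix (Fin n) (Fin m) ℝ)
    (C : Matrix (Fin p) (Fin n) ℝ) (D : Matrix (Fin p) (Fin m) ℝ)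
    (s : ℂ) (k : ℕ) : Matrix (Fin p) (Fin m) ℂ :=
  if k = 0 then
    C.map Complex.ofReal * (s • (1 : Matrix (Fin n) (Fin n) ℂ) - A.map Complex.ofReal)⁻¹ *
      B.map Complex.ofReal + D.map Complex.ofReal
  else
    C.map Complex.ofReal *
      ((s • (1 : Matrix (Fin n) (Fin n) ℂ) - A.map Complex.ofReal)⁻¹) ^ (k + 1) *
      B.map Complex.ofReal

/-- `vec` stacks the columns of a matrix into a single vector:
`vec(M) (j, i) = M i j`. -/
def vec {α β : Type*} (M : Matrix α β ℂ) : β × α → ℂ := fun x => M x.2 x.1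

/-!
Conjugating by `T` turns `Π_M S = A Π_M + B M` into the Sylvester equation `P Σ = A P + B L`
with `P = Π_M T⁻¹`, `L = M T⁻¹` and `Σ` in Jordan form. Cut down to the `i`-th Jordan block
by the selector `E_i`, it reads `(s_i - A) X = B L E_i + X N` with `X = P E_i` and
`N = s_i - Σ`, and `X N^{ν_i} = 0`; since `s_i` is not an eigenvalue of `A`, unfolding gives
`X = ∑_{k < ν_i} (s_i - A)^{-(k+1)} B L E_i N^k`, i.e.
`(C P + D L) E_i = ∑_k η_k(s_i) L E_i N^k E_i`.
Vectorising with `vec (Y X Zᵀ) = (Z ⊗ Y) vec X` and summing over the blocks gives the claim.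
-/

open Finset

namespace Matrix

variable {α l m : Type*} [Semiring α] [Fintype l] [DecidableEq l] [Fintype m] [DecidableEq m]
  {F R : Matrix l l α} {X Y : Matrix l m α} {N : Matrix m m α}

theorem eq_sum_add_of_mul_eq_add_mul (hR : R * F = 1) (hX : F * X = Y + X * N) (K : ℕ) :
    X = ∑ k ∈ range K, R ^ (k + 1) * Y * N ^ k + R ^ K * X * N ^ K := by
  have hX' : X = R * Y + R * X * N := by
    rw [Matrix.mul_assoc R X, ← Matrix.mul_add, ← hX, ← Matrix.mul_assoc, hR, Matrix.one_mul]
  induction K with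
  | zero => simp
  | succ K ih =>
    have hstep : R ^ K * X * N ^ K = R ^ (K + 1) * Y * N ^ K + R ^ (K + 1) * X * N ^ (K + 1) := by
      conv_lhs => rw [hX']
      simp only [pow_succ R, pow_succ' N, Matrix.mul_add, Matrix.add_mul, Matrix.mul_assoc]
    rw [sum_range_succ, add_assoc, ← hstep]
    exact ih

theorem eq_sum_of_mul_eq_add_mul (hR : R * F = 1) (hX : F * X = Y + X * N) {r : ℕ}
    (hXN : X * N ^ r = 0) : X = ∑ k ∈ range r, R ^ (k + 1) * Y * N ^ k := by
  simpa [Matrix.mul_assoc, hXN] using eq_sum_add_of_mul_eq_add_mul hR hX r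

theorem map_ofReal_mul {l m o : Type*} [Fintype m] (X : Matrix l m ℝ) (Y : Matrix m o ℝ) :
    (X * Y).map Complex.ofReal = X.map Complex.ofReal * Y.map Complex.ofReal :=
  Matrix.map_mul (f := Complex.ofRealHom)

theorem smul_one_sub_mul_mul_eq_of_commute {𝕜 n o : Type*} [CommRing 𝕜] [Fintype n]
    [DecidableEq n] [Fintype o] {A : Matrix n n 𝕜} {B : Matrix n o 𝕜} {L : Matrix o m 𝕜}
    {P : Matrix n m 𝕜} {J E : Matrix m m 𝕜} (c : 𝕜) (hEJ : Commute E J)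
    (hP : P * J = A * P + B * L) :
    (c • 1 - A) * (P * E) = B * L * E + P * E * (c • 1 - J) := by
  calc (c • 1 - A) * (P * E) = c • (P * E) - A * P * E := by
        rw [Matrix.sub_mul, Matrix.smul_mul, Matrix.one_mul, Matrix.mul_assoc]
    _ = B * L * E + (c • (P * E) - P * J * E) := by
        rw [hP, Matrix.add_mul]; abel
    _ = B * L * E + P * E * (c • 1 - J) := by
        rw [Matrix.mul_sub, Matrix.mul_smul, Matrix.mul_one, Matrix.mul_assoc P E, hEJ.eq,
          ← Matrix.mul_assoc]

theorem transpose_kronecker_one_conj_mulVec_vec {𝕜 ι κ μ : Type*} [CommRing 𝕜]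
    [Fintype ι] [DecidableEq ι] [Fintype κ] [DecidableEq κ] [Fintype μ] [DecidableEq μ]
    {T : Matrix ι ι 𝕜} {H : Matrix (ι × μ) (ι × κ) 𝕜} {X : Matrix κ ι 𝕜} {Y : Matrix μ ι 𝕜}
    (hH : H *ᵥ Matrix.vec (X * T⁻¹) = Matrix.vec Y) :
    ((T ⊗ₖ (1 : Matrix μ μ 𝕜))ᵀ * H * ((T ⊗ₖ (1 : Matrix κ κ 𝕜))ᵀ)⁻¹) *ᵥ Matrix.vec X
      = Matrix.vec (Y * T) := by
  rw [← kroneckerMap_transpose, ← kroneckerMap_transpose, transpose_one, transpose_one,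
    inv_kronecker, inv_one, ← mulVec_mulVec, ← mulVec_mulVec, kronecker_mulVec_vec,
    Matrix.one_mul, ← transpose_nonsing_inv, transpose_transpose, hH, kronecker_mulVec_vec,
    Matrix.one_mul, transpose_transpose]

end Matrix

theorem jordanBlock_sub_smul_one_apply (s : ℂ) (r : ℕ) (i j : Fin r) :
    (jordanBlock s r - s • 1) i j = if (i : ℕ) + 1 = j then 1 else 0 := by
  by_cases h : (i : ℕ) = j <;> simp [jordanBlock, one_apply, Fin.ext_iff, h]

theorem jordanBlock_sub_smul_one_pow_apply (s : ℂ) (r k : ℕ) (i j : Fin r) :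
    ((jordanBlock s r - s • 1) ^ k) i j = if (i : ℕ) + k = j then 1 else 0 := by
  induction k generalizing j with
  | zero => simp [one_apply, Fin.ext_iff]
  | succ k ih =>
    simp only [pow_succ, mul_apply, ih, jordanBlock_sub_smul_one_apply, ite_mul, one_mul, zero_mul]
    by_cases h : (i : ℕ) + k < r
    · rw [Fintype.sum_eq_single ⟨_, h⟩ fun l hl => if_neg fun h' => hl (Fin.ext h'.symm)]
      simp [add_assoc]
    · rw [if_neg (by omega)]
      exact Fintype.sum_eq_zero _ fun l => if_neg (by omega)

theorem smul_one_sub_jordanBlock_pow_self (s : ℂ) (r : ℕ) :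
    (s • 1 - jordanBlock s r) ^ r = 0 := by
  have : (jordanBlock s r - s • 1) ^ r = 0 := by
    ext i j
    rw [jordanBlock_sub_smul_one_pow_apply, if_neg (by omega), Matrix.zero_apply]
  rw [← neg_sub, neg_pow, this, mul_zero]

section JordanForm

variable {d : ℕ} (νs : Fin d → ℕ) (s : Fin d → ℂ)

def blockSelector (i : Fin d) : Matrix (Σ j, Fin (νs j)) (Σ j, Fin (νs j)) ℂ :=
  diagonal fun a => if a.1 = i then 1 else 0

def jordanMatrix : Matrix (Σ j, Fin (νs j)) (Σ j, Fin (νs j)) ℂ :=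
  blockDiagonal' fun j => jordanBlock (s j) (νs j)

theorem blockSelector_eq_blockDiagonal' (i : Fin d) :
    blockSelector νs i = blockDiagonal' (Pi.single i 1) := by
  ext ⟨j, a⟩ ⟨k, b⟩
  by_cases hjk : j = k
  · subst hjk
    by_cases hji : j = i
    · subst hji
      simp [blockSelector, diagonal_apply, one_apply]
    · simp [blockSelector, diagonal_apply, hji]
  · simp [blockSelector, blockDiagonal'_apply, hjk]

theorem sum_blockSelector : ∑ i, blockSelector νs i = 1 := by
  ext a b
  by_cases hab : a = b <;> simp [blockSelector, Matrix.sum_apply, one_apply, hab]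

theorem blockSelector_mul_self (i : Fin d) :
    blockSelector νs i * blockSelector νs i = blockSelector νs i := by
  simp [blockSelector]

theorem transpose_blockSelector (i : Fin d) : (blockSelector νs i)ᵀ = blockSelector νs i :=
  diagonal_transpose _

theorem commute_blockSelector_jordanMatrix (i : Fin d) :
    Commute (blockSelector νs i) (jordanMatrix νs s) := by
  rw [blockSelector_eq_blockDiagonal', jordanMatrix, Commute, SemiconjBy, ← blockDiagonal'_mul,
    ← blockDiagonal'_mul]
  congr 1
  ext1 j
  by_cases hj : j = i
  · subst hj; simp
  · simp [hj]

theorem blockSelector_mul_smul_one_sub_jordanMatrix_pow (i : Fin d) :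
    blockSelector νs i * (s i • 1 - jordanMatrix νs s) ^ νs i = 0 := by
  have : s i • 1 - jordanMatrix νs s =
      blockDiagonal' (s i • 1 - fun j => jordanBlock (s j) (νs j)) := by
    rw [jordanMatrix, blockDiagonal'_sub, blockDiagonal'_smul, blockDiagonal'_one]
  rw [this, blockSelector_eq_blockDiagonal', ← blockDiagonal'_pow, ← blockDiagonal'_mul]
  change blockDiagonal' (Pi.single (M := fun j => Matrix (Fin (νs j)) (Fin (νs j)) ℂ) i 1 * _)
    = 0
  simp [← Pi.single_mul_left, smul_one_sub_jordanBlock_pow_self]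

theorem mem_spectrum_jordanMatrix {i : Fin d} (hi : 0 < νs i) :
    s i ∈ spectrum ℂ (jordanMatrix νs s) := by
  rw [spectrum.mem_iff, Algebra.algebraMap_eq_smul_one]
  intro hunit
  have hE : blockSelector νs i = 0 :=
    (hunit.pow _).mul_left_eq_zero.mp (blockSelector_mul_smul_one_sub_jordanMatrix_pow νs s i)
  simpa [blockSelector] using congr_fun₂ hE ⟨i, 0, hi⟩ ⟨i, 0, hi⟩

end JordanForm

section Moments

variable {n m p : ℕ} (A : Matrix (Fin n) (Fin n) ℝ) (B : Matrix (Fin n) (Fin m) ℝ)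
  (C : Matrix (Fin p) (Fin n) ℝ) (D : Matrix (Fin p) (Fin m) ℝ)

theorem kMoment_eq (z : ℂ) (k : ℕ) :
    kMoment A B C D z k = C.map Complex.ofReal * ((z • 1 - A.map Complex.ofReal)⁻¹) ^ (k + 1) *
      B.map Complex.ofReal + if k = 0 then D.map Complex.ofReal else 0 := by
  rcases k with _ | k <;> simp [kMoment]

variable {d : ℕ} (νs : Fin d → ℕ) (s : Fin d → ℂ)

noncomputable def momentMatrix :
    Matrix ((Σ j, Fin (νs j)) × Fin p) ((Σ j, Fin (νs j)) × Fin m) ℂ :=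
  ∑ i, ∑ k ∈ range (νs i), (blockSelector νs i * (s i • 1 - (jordanMatrix νs s)ᵀ) ^ k *
    blockSelector νs i) ⊗ₖ kMoment A B C D (s i) k

variable {A B C D νs s}

theorem mul_blockSelector_eq_sum_kMoment
    (hdisj : ∀ μ : ℂ,
      ¬(μ ∈ spectrum ℂ (A.map Complex.ofReal) ∧ μ ∈ spectrum ℂ (jordanMatrix νs s)))
    {P : Matrix (Fin n) (Σ j, Fin (νs j)) ℂ} {L : Matrix (Fin m) (Σ j, Fin (νs j)) ℂ}
    (hP : P * jordanMatrix νs s = A.map Complex.ofReal * P + B.map Complex.ofReal * L)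
    (i : Fin d) :
    (C.map Complex.ofReal * P + D.map Complex.ofReal * L) * blockSelector νs i =
      ∑ k ∈ range (νs i), kMoment A B C D (s i) k * L *
        (blockSelector νs i * (s i • 1 - jordanMatrix νs s) ^ k * blockSelector νs i) := by
  set E := blockSelector νs i
  set N := s i • 1 - jordanMatrix νs s
  have hEJ : Commute E (jordanMatrix νs s) := commute_blockSelector_jordanMatrix νs s i
  have hEN : Commute E N := ((Commute.one_right E).smul_right (s i)).sub_right hEJ
  have hENE : ∀ k, E * N ^ k * E = E * N ^ k := fun k => by
    rw [Matrix.mul_assoc, ← (hEN.pow_right k).eq, ← Matrix.mul_assoc, blockSelector_mul_self]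
  have hnil : E * N ^ νs i = 0 := blockSelector_mul_smul_one_sub_jordanMatrix_pow νs s i
  simp_rw [hENE]
  rcases (νs i).eq_zero_or_pos with hν | hν
  · rw [hν, pow_zero, Matrix.mul_one] at hnil
    simp [hν, hnil]
  have hR : (s i • 1 - A.map Complex.ofReal)⁻¹ * (s i • 1 - A.map Complex.ofReal) = 1 := by
    refine nonsing_inv_mul _ ((isUnit_iff_isUnit_det _).mp ?_)
    rw [← Algebra.algebraMap_eq_smul_one, ← spectrum.notMem_iff]
    exact fun h => hdisj _ ⟨h, mem_spectrum_jordanMatrix νs s hν⟩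
  have hX : (s i • 1 - A.map Complex.ofReal) * (P * E) =
      B.map Complex.ofReal * L * E + P * E * N :=
    smul_one_sub_mul_mul_eq_of_commute (s i) hEJ hP
  have hsol := eq_sum_of_mul_eq_add_mul hR hX (r := νs i)
    (by rw [Matrix.mul_assoc, hnil, Matrix.mul_zero])
  rw [Matrix.add_mul, Matrix.mul_assoc, hsol]
  simp only [kMoment_eq, Matrix.add_mul, sum_add_distrib]
  congr 1
  · rw [Matrix.mul_sum]
    exact sum_congr rfl fun k _ => by simp only [Matrix.mul_assoc]
  · rw [sum_eq_single_of_mem 0 (mem_range.2 hν) fun k _ hk => by simp [hk]]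
    simp

theorem momentMatrix_mulVec_vec
    (hdisj : ∀ μ : ℂ,
      ¬(μ ∈ spectrum ℂ (A.map Complex.ofReal) ∧ μ ∈ spectrum ℂ (jordanMatrix νs s)))
    {P : Matrix (Fin n) (Σ j, Fin (νs j)) ℂ} {L : Matrix (Fin m) (Σ j, Fin (νs j)) ℂ}
    (hP : P * jordanMatrix νs s = A.map Complex.ofReal * P + B.map Complex.ofReal * L) :
    momentMatrix A B C D νs s *ᵥ Matrix.vec L =
      Matrix.vec (C.map Complex.ofReal * P + D.map Complex.ofReal * L) := by
  have hG (i : Fin d) (k : ℕ) :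
      (blockSelector νs i * (s i • 1 - (jordanMatrix νs s)ᵀ) ^ k * blockSelector νs i)ᵀ =
        blockSelector νs i * (s i • 1 - jordanMatrix νs s) ^ k * blockSelector νs i := by
    simp only [transpose_mul, transpose_blockSelector, transpose_pow, transpose_sub,
      transpose_smul, transpose_one, transpose_transpose, Matrix.mul_assoc]
  calc momentMatrix A B C D νs s *ᵥ Matrix.vec L
      = Matrix.vec (∑ i, ∑ k ∈ range (νs i), kMoment A B C D (s i) k * L *
          (blockSelector νs i * (s i • 1 - jordanMatrix νs s) ^ k * blockSelector νs i)) := by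
        simp only [momentMatrix, sum_mulVec, kronecker_mulVec_vec, hG, vec_sum]
    _ = Matrix.vec (∑ i, (C.map Complex.ofReal * P + D.map Complex.ofReal * L) *
          blockSelector νs i) := by
        simp only [mul_blockSelector_eq_sum_kMoment hdisj hP]
    _ = _ := by rw [← Matrix.mul_sum, sum_blockSelector, Matrix.mul_one]

end Moments

/-- **Corollary 1.** Under the hypotheses of Theorem 2, with
`𝐇 = Σ_i Σ_k (E_i (s_i I - Σᵀ)^k E_i) ⊗ η_k(s_i)` and
`𝐓_S = (T ⊗ I_p)ᵀ 𝐇 ((T ⊗ I_m)ᵀ)⁻¹`, for every `M ∈ ℝ^{m×ν}` with `Π_M S = AΠ_M + BM`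
one has `vec(T_S(M)) = 𝐓_S vec(M)`. -/
theorem moment_transfer_operator_matrix_representation
    (n m p d : ℕ) (νs : Fin d → ℕ) (s : Fin d → ℂ)
    (A : Matrix (Fin n) (Fin n) ℝ) (B : Matrix (Fin n) (Fin m) ℝ)
    (C : Matrix (Fin p) (Fin n) ℝ) (D : Matrix (Fin p) (Fin m) ℝ)
    (S : Matrix ((i : Fin d) × Fin (νs i)) ((i : Fin d) × Fin (νs i)) ℝ)
    (hdisj : ∀ μ : ℂ, ¬(μ ∈ spectrum ℂ (A.map Complex.ofReal) ∧
      μ ∈ spectrum ℂ (S.map Complex.ofReal)))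
    (T : Matrix ((i : Fin d) × Fin (νs i)) ((i : Fin d) × Fin (νs i)) ℂ)
    (hT : IsUnit T.det)
    (hJordan : S.map Complex.ofReal =
      T⁻¹ * Matrix.blockDiagonal' (fun i => jordanBlock (s i) (νs i)) * T)
    (M : Matrix (Fin m) ((i : Fin d) × Fin (νs i)) ℝ)
    (PiM : Matrix (Fin n) ((i : Fin d) × Fin (νs i)) ℝ)
    (hPiM : PiM * S = A * PiM + B * M) :
    _root_.vec ((C * PiM + D * M).map Complex.ofReal) =
      ((T ⊗ₖ (1 : Matrix (Fin p) (Fin p) ℂ))ᵀ *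
        (∑ i : Fin d, ∑ k ∈ Finset.range (νs i),
          (Matrix.diagonal (fun a : (i : Fin d) × Fin (νs i) =>
              if a.1 = i then (1 : ℂ) else 0) *
            ((s i) • (1 : Matrix ((i : Fin d) × Fin (νs i)) ((i : Fin d) × Fin (νs i)) ℂ) -
              (Matrix.blockDiagonal' (fun j => jordanBlock (s j) (νs j)))ᵀ) ^ k *
            Matrix.diagonal (fun a : (i : Fin d) × Fin (νs i) =>
              if a.1 = i then (1 : ℂ) else 0)) ⊗ₖ kMoment A B C D (s i) k) *
        ((T ⊗ₖ (1 : Matrix (Fin m) (Fin m) ℂ))ᵀ)⁻¹).mulVec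
          (_root_.vec (M.map Complex.ofReal)) := by
  have hTunit : IsUnit T := (isUnit_iff_isUnit_det T).mpr hT
  have hspec : spectrum ℂ (S.map Complex.ofReal) = spectrum ℂ (jordanMatrix νs s) := by
    have h := spectrum.units_conjugate' (R := ℂ) (u := hTunit.unit)
      (a := blockDiagonal' fun i => jordanBlock (s i) (νs i))
    rwa [coe_units_inv, IsUnit.unit_spec, ← hJordan] at h
  have hPiMc : PiM.map Complex.ofReal * S.map Complex.ofReal =
      A.map Complex.ofReal * PiM.map Complex.ofReal +
        B.map Complex.ofReal * M.map Complex.ofReal := by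
    simpa [Matrix.map_ofReal_mul, Matrix.map_add] using congrArg (Matrix.map · Complex.ofReal) hPiM
  have hP : PiM.map Complex.ofReal * T⁻¹ * jordanMatrix νs s =
      A.map Complex.ofReal * (PiM.map Complex.ofReal * T⁻¹) +
        B.map Complex.ofReal * (M.map Complex.ofReal * T⁻¹) := by
    calc PiM.map Complex.ofReal * T⁻¹ * jordanMatrix νs s
        = PiM.map Complex.ofReal * (T⁻¹ * jordanMatrix νs s * T) * T⁻¹ := by
          simp only [Matrix.mul_assoc, mul_nonsing_inv _ hT, Matrix.mul_one]
      _ = _ := by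
          rw [jordanMatrix, ← hJordan, hPiMc, Matrix.add_mul, Matrix.mul_assoc, Matrix.mul_assoc]
  have key := transpose_kronecker_one_conj_mulVec_vec
    (momentMatrix_mulVec_vec (C := C) (D := D) (hspec ▸ hdisj) hP)
  -- `_root_.vec` and `Matrix.vec` are definitionally equal.
  refine Eq.trans ?_ key.symm
  exact congrArg Matrix.vec (by
    simp [Matrix.map_ofReal_mul, Matrix.map_add, Matrix.add_mul, Matrix.mul_assoc,
      nonsing_inv_mul _ hT])
end

section
/- (Lemma 2) Assume the spectra of A and S are disjoint. Let M_des ∈ ℝ^{p×ν}, M_c ∈ ℝ^{m×ν}, and G_a ∈ ℝ^{ν×p}, suppose M_c satisfies T_S(M_c) = M_des − M_open, and define A_aug := [[A, B·M_c],[G_a·C, S − G_a·(M_des − D·M_c)]] ∈ ℝ^{(n+ν)×(n+ν)} and C_aug := [C, −(M_des − D·M_c)] ∈ ℝ^{p×(n+ν)}. Then (C_aug, A_aug) is PBH-detectable if and only if both (C, A) and (M_open, S) are PBH-detectable. -/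
/-!
In the coordinates `(x - Π̂ w, w)`, the Sylvester equation `Π̂ S = A Π̂ + B M_c` and the identity
`M_des - D M_c - C Π̂ = M_open` turn the augmented pair into `(C̃, diag(A, S) + K C̃)` with
`C̃ = [C, -M_open]` and `K = [-Π̂ G_a; G_a]`. PBH detectability is invariant under similarity and
under output injection `A ↦ A + K C`, and for the block-diagonal pair an unobservable eigenvector
`(x, w)` has `x = 0` or `w = 0` because `A` and `S` share no eigenvalue.
-/

open Matrix

/-- A pair `(C, A)` is PBH-detectable if for every `λ ∈ ℂ` with `Re λ ≥ 0` the stacked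
complex matrix `[A - λI; C]` has full column rank. -/
def PBHDetectable {c a : Type*} [Fintype c] [Fintype a] [DecidableEq a]
    (C : Matrix c a ℝ) (A : Matrix a a ℝ) : Prop :=
  ∀ l : ℂ, 0 ≤ l.re →
    (Matrix.fromRows (A.map Complex.ofReal - l • (1 : Matrix a a ℂ))
      (C.map Complex.ofReal)).rank = Fintype.card a

theorem Matrix.map_ofReal_mul_s12 {a b c : Type*} [Fintype b] (X : Matrix a b ℝ) (Y : Matrix b c ℝ) :
    (X * Y).map Complex.ofReal = X.map Complex.ofReal * Y.map Complex.ofReal :=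
  Matrix.map_mul (f := Complex.ofRealHom)

theorem Matrix.rank_eq_card_iff {K a b : Type*} [Field K] [Fintype b] [DecidableEq b]
    (M : Matrix a b K) : M.rank = Fintype.card b ↔ ∀ v, M *ᵥ v = 0 → v = 0 := by
  have := LinearMap.finrank_range_add_finrank_ker M.mulVecLin
  rw [Module.finrank_fintype_fun_eq_card] at this
  rw [← Matrix.ker_mulVecLin_eq_bot_iff, ← Submodule.finrank_eq_zero, Matrix.rank]
  omega

theorem Matrix.mem_spectrum_of_mulVec_eq_smul {R a : Type*} [CommRing R] [Fintype a]
    [DecidableEq a] {M : Matrix a a R} {μ : R} {v : a → R} (hv : v ≠ 0) (h : M *ᵥ v = μ • v) :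
    μ ∈ spectrum R M := by
  rw [← Matrix.spectrum_toLin']
  exact (Module.End.hasEigenvalue_of_hasEigenvector
    ⟨Module.End.mem_eigenspace_iff.mpr h, hv⟩).mem_spectrum

section PBHDetectable

variable {c a b : Type*} [Fintype c] [Fintype a] [DecidableEq a]
  [Fintype b] [DecidableEq b]

theorem pbhDetectable_iff (C : Matrix c a ℝ) (A : Matrix a a ℝ) :
    PBHDetectable C A ↔ ∀ l : ℂ, 0 ≤ l.re → ∀ v : a → ℂ,
      A.map Complex.ofReal *ᵥ v = l • v → C.map Complex.ofReal *ᵥ v = 0 → v = 0 := by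
  refine forall₂_congr fun l _ => ?_
  simp only [rank_eq_card_iff, fromRows_mulVec, ← Sum.elim_zero_zero, Sum.elim_eq_iff,
    sub_mulVec, smul_mulVec, one_mulVec, sub_eq_zero, and_imp]

theorem pbhDetectable_neg_iff {C : Matrix c a ℝ} {A : Matrix a a ℝ} :
    PBHDetectable (-C) A ↔ PBHDetectable C A := by
  simp [pbhDetectable_iff, Matrix.map_neg _ Complex.ofReal_neg, neg_mulVec]

theorem pbhDetectable_add_mul_iff {C : Matrix c a ℝ} {A : Matrix a a ℝ} (K : Matrix a c ℝ) :
    PBHDetectable C (A + K * C) ↔ PBHDetectable C A := by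
  have hA {v : a → ℂ} (hCv : C.map Complex.ofReal *ᵥ v = 0) :
      (A + K * C).map Complex.ofReal *ᵥ v = A.map Complex.ofReal *ᵥ v := by
    rw [Matrix.map_add _ Complex.ofReal_add, map_ofReal_mul_s12, add_mulVec, ← mulVec_mulVec, hCv,
      mulVec_zero, add_zero]
  simp only [pbhDetectable_iff]
  refine forall₃_congr fun l _ v => ⟨fun h hAv hCv => h ?_ hCv, fun h hAv hCv => h ?_ hCv⟩
  · rwa [hA hCv]
  · rwa [← hA hCv]

theorem PBHDetectable.of_mul_eq {C C' : Matrix c a ℝ} {A A' T : Matrix a a ℝ} (hT : IsUnit T)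
    (hA : A * T = T * A') (hC : C * T = C') (h : PBHDetectable C A) : PBHDetectable C' A' := by
  rw [pbhDetectable_iff] at h ⊢
  intro l hl v hAv hCv
  have hTinj : Function.Injective (T.map Complex.ofReal).mulVec :=
    mulVec_injective_iff_isUnit.mpr (hT.map Complex.ofRealHom.mapMatrix)
  refine hTinj ((h l hl _ ?_ ?_).trans (mulVec_zero _).symm)
  · rw [mulVec_mulVec, ← map_ofReal_mul_s12, hA, map_ofReal_mul_s12, ← mulVec_mulVec, hAv, mulVec_smul]
  · rw [mulVec_mulVec, ← map_ofReal_mul_s12, hC, hCv]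

theorem pbhDetectable_iff_of_mul_eq {C C' : Matrix c a ℝ} {A A' T : Matrix a a ℝ}
    (hT : IsUnit T) (hA : A * T = T * A') (hC : C * T = C') :
    PBHDetectable C' A' ↔ PBHDetectable C A := by
  obtain ⟨T, rfl⟩ := hT
  refine ⟨PBHDetectable.of_mul_eq T⁻¹.isUnit ?_ ?_, PBHDetectable.of_mul_eq T.isUnit hA hC⟩
  · rw [Units.eq_inv_mul_iff_mul_eq, ← mul_assoc, ← hA, Units.mul_inv_cancel_right]
  · rw [← hC, Matrix.mul_assoc, Units.mul_inv, Matrix.mul_one]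

theorem pbhDetectable_fromCols_fromBlocks_zero_iff {C₁ : Matrix c a ℝ} {C₂ : Matrix c b ℝ}
    {A₁ : Matrix a a ℝ} {A₂ : Matrix b b ℝ}
    (hdisj : Disjoint (spectrum ℂ (A₁.map Complex.ofReal)) (spectrum ℂ (A₂.map Complex.ofReal))) :
    PBHDetectable (fromCols C₁ C₂) (fromBlocks A₁ 0 0 A₂) ↔
      PBHDetectable C₁ A₁ ∧ PBHDetectable C₂ A₂ := by
  have hA (l : ℂ) (x : a → ℂ) (w : b → ℂ) :
      (fromBlocks A₁ 0 0 A₂).map Complex.ofReal *ᵥ Sum.elim x w = l • Sum.elim x w ↔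
        A₁.map Complex.ofReal *ᵥ x = l • x ∧ A₂.map Complex.ofReal *ᵥ w = l • w := by
    simp only [fromBlocks_map, Complex.ofReal_zero, Matrix.map_zero, fromBlocks_mulVec,
      Sum.elim_comp_inl, Sum.elim_comp_inr, zero_mulVec, add_zero, zero_add, funext_iff,
      Pi.smul_apply, Sum.forall, Sum.elim_inl, Sum.elim_inr]
  have hC (x : a → ℂ) (w : b → ℂ) : (fromCols C₁ C₂).map Complex.ofReal *ᵥ Sum.elim x w =
      C₁.map Complex.ofReal *ᵥ x + C₂.map Complex.ofReal *ᵥ w := by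
    rw [fromCols_map, fromCols_mulVec_sumElim]
  simp only [pbhDetectable_iff]
  constructor
  · intro h
    refine ⟨fun l hl x hAx hCx => ?_, fun l hl w hAw hCw => ?_⟩
    · have := h l hl (Sum.elim x 0) ((hA l x 0).mpr ⟨hAx, by simp⟩) (by simp [hC, hCx])
      exact (Sum.elim_eq_iff.mp (this.trans Sum.elim_zero_zero.symm)).1
    · have := h l hl (Sum.elim 0 w) ((hA l 0 w).mpr ⟨by simp, hAw⟩) (by simp [hC, hCw])
      exact (Sum.elim_eq_iff.mp (this.trans Sum.elim_zero_zero.symm)).2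
  · rintro ⟨h₁, h₂⟩ l hl z hAz hCz
    obtain ⟨x, w, rfl⟩ : ∃ x w, z = Sum.elim x w := ⟨_, _, (Sum.elim_comp_inl_inr z).symm⟩
    obtain ⟨hAx, hAw⟩ := (hA l x w).mp hAz
    rw [hC] at hCz
    obtain rfl | rfl : x = 0 ∨ w = 0 := by
      by_contra! ⟨hx, hw⟩
      exact Set.disjoint_left.mp hdisj (mem_spectrum_of_mulVec_eq_smul hx hAx)
        (mem_spectrum_of_mulVec_eq_smul hw hAw)
    · rw [h₂ l hl w hAw (by simpa using hCz), Sum.elim_zero_zero]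
    · rw [h₁ l hl x hAx (by simpa using hCz), Sum.elim_zero_zero]

end PBHDetectable

theorem augmented_detectable_iff_general (n m p q ν : ℕ)
    (A : Matrix (Fin n) (Fin n) ℝ) (B : Matrix (Fin n) (Fin m) ℝ)
    (C : Matrix (Fin p) (Fin n) ℝ) (D : Matrix (Fin p) (Fin m) ℝ)
    (Q : Matrix (Fin p) (Fin q) ℝ)
    (S : Matrix (Fin ν) (Fin ν) ℝ) (L : Matrix (Fin q) (Fin ν) ℝ)
    (hdisj : ∀ μ : ℂ, ¬(μ ∈ spectrum ℂ (A.map Complex.ofReal) ∧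
      μ ∈ spectrum ℂ (S.map Complex.ofReal)))
    (Mdes : Matrix (Fin p) (Fin ν) ℝ) (Mc : Matrix (Fin m) (Fin ν) ℝ)
    (Ga : Matrix (Fin ν) (Fin p) ℝ)
    (Pi : Matrix (Fin n) (Fin ν) ℝ)
    (Pihat : Matrix (Fin n) (Fin ν) ℝ) (hPihat : Pihat * S = A * Pihat + B * Mc)
    -- `T_S(M_c) = M_des - M_open`:
    (hMc : C * Pihat + D * Mc = Mdes - (C * Pi + Q * L)) :
    PBHDetectable
      (Matrix.fromCols C (-(Mdes - D * Mc)))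
      (Matrix.fromBlocks A (B * Mc) (Ga * C) (S - Ga * (Mdes - D * Mc))) ↔
    (PBHDetectable C A ∧ PBHDetectable (C * Pi + Q * L) S) := by
  set Mopen := C * Pi + Q * L
  have hMopen : Mopen = Mdes - D * Mc - C * Pihat := by
    rw [sub_sub, add_comm (D * Mc), hMc, sub_sub_cancel]
  let T : Matrix (Fin n ⊕ Fin ν) (Fin n ⊕ Fin ν) ℝ := fromBlocks 1 Pihat 0 1
  have hT : IsUnit T := by simp [T, isUnit_iff_isUnit_det]
  have hA : fromBlocks A (B * Mc) (Ga * C) (S - Ga * (Mdes - D * Mc)) * T =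
      T * (fromBlocks A 0 0 S + fromRows (-(Pihat * Ga)) Ga * fromCols C (-Mopen)) := by
    simp only [T, fromRows_mul_fromCols, fromBlocks_add, fromBlocks_multiply, fromBlocks_inj,
      Matrix.mul_add, Matrix.mul_sub, Matrix.mul_neg, Matrix.neg_mul, Matrix.mul_assoc,
      Matrix.mul_zero, Matrix.zero_mul, Matrix.mul_one, Matrix.one_mul, add_zero, zero_add,
      neg_zero, neg_neg]
    refine ⟨by abel, ?_, trivial, ?_⟩
    · rw [← hPihat]; abel
    · rw [hMopen]; simp only [Matrix.mul_sub]; abel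
  have hC : fromCols C (-(Mdes - D * Mc)) * T = fromCols C (-Mopen) := by
    simp only [T, fromCols_mul_fromBlocks, Matrix.mul_zero, Matrix.mul_one, add_zero]
    rw [hMopen]
    congr 1
    abel
  rw [← pbhDetectable_iff_of_mul_eq hT hA hC, pbhDetectable_add_mul_iff,
    pbhDetectable_fromCols_fromBlocks_zero_iff
      (Set.disjoint_left.mpr fun μ h₁ h₂ => hdisj μ ⟨h₁, h₂⟩),
    pbhDetectable_neg_iff]

/-- **Lemma 2.** Assume the spectra of `A` and `S` are disjoint and
`M_c` satisfies `T_S(M_c) = M_des - M_open` (witnessed by the Sylvester solutions `Π` and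
`Π̂`). Then the augmented pair `(C_aug, A_aug)` is PBH-detectable if and only if both
`(C, A)` and `(M_open, S)` are PBH-detectable. -/
theorem augmented_detectable_iff (n m p q ν : ℕ)
    (A : Matrix (Fin n) (Fin n) ℝ) (B : Matrix (Fin n) (Fin m) ℝ)
    (C : Matrix (Fin p) (Fin n) ℝ) (D : Matrix (Fin p) (Fin m) ℝ)
    (P : Matrix (Fin n) (Fin q) ℝ) (Q : Matrix (Fin p) (Fin q) ℝ)
    (S : Matrix (Fin ν) (Fin ν) ℝ) (L : Matrix (Fin q) (Fin ν) ℝ)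
    (hdisj : ∀ μ : ℂ, ¬(μ ∈ spectrum ℂ (A.map Complex.ofReal) ∧
      μ ∈ spectrum ℂ (S.map Complex.ofReal)))
    (Mdes : Matrix (Fin p) (Fin ν) ℝ) (Mc : Matrix (Fin m) (Fin ν) ℝ)
    (Ga : Matrix (Fin ν) (Fin p) ℝ)
    (Pi : Matrix (Fin n) (Fin ν) ℝ) (hPi : Pi * S = A * Pi + P * L)
    (Pihat : Matrix (Fin n) (Fin ν) ℝ) (hPihat : Pihat * S = A * Pihat + B * Mc)
    -- `T_S(M_c) = M_des - M_open`:
    (hMc : C * Pihat + D * Mc = Mdes - (C * Pi + Q * L)) :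
    PBHDetectable
      (Matrix.fromCols C (-(Mdes - D * Mc)))
      (Matrix.fromBlocks A (B * Mc) (Ga * C) (S - Ga * (Mdes - D * Mc))) ↔
    (PBHDetectable C A ∧ PBHDetectable (C * Pi + Q * L) S) :=
  augmented_detectable_iff_general n m p q ν A B C D Q S L hdisj Mdes Mc Ga Pi Pihat hPihat hMc
end
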